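/- Every outerplanar graph on n vertices whose outer face is a Hamiltonian cycle is a minor of the graph obtained from the half-grid {(i,j) : 0 <= j <= i < n} (with grid adjacency) by adding the edge between (0,0) and (n-1,n-1), in such a way that each original vertex v_i (in cyclic order along the outer face) is represented by a connected set of half-grid vertices containing the diagonal vertex (i,i). -/
import Mathlib


open SimpleGraph

/-- Vertices of the half-grid of side `n`: pairs `(i,j)` with `0 ≤ j ≤ i < n`. -/
def HalfGridVertex (n : ℕ) : Type := {p : ℕ × ℕ // p.2 ≤ p.1 ∧ p.1 < n}

/-- The half-grid graph: `(i,j)` adjacent to `(i',j')` iff `|i-i'| + |j-j'| = 1`. -/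
def halfGrid (n : ℕ) : SimpleGraph (HalfGridVertex n) :=
  SimpleGraph.fromRel fun p q =>
    (((p.1.1 : ℤ) - q.1.1).natAbs + ((p.1.2 : ℤ) - q.1.2).natAbs = 1)

/-- The half-grid together with the extra edge joining `(0,0)` and `(n-1,n-1)`,
closing the diagonal into a cycle. -/
def halfGridClosed (n : ℕ) : SimpleGraph (HalfGridVertex n) :=
  halfGrid n ⊔ SimpleGraph.fromRel fun p q => p.1 = (0, 0) ∧ q.1 = (n - 1, n - 1)

namespace OPAux

variable {n : ℕ}

lemma hg_adj {a b : HalfGridVertex n}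
    (h : ((a.1.1 : ℤ) - b.1.1).natAbs + ((a.1.2 : ℤ) - b.1.2).natAbs = 1) :
    (halfGridClosed n).Adj a b := by
  have hne : a ≠ b := by
    intro he; subst he; simp at h
  exact Or.inl ⟨hne, Or.inl h⟩

lemma adj_right {a b : HalfGridVertex n} (h1 : a.1.1 = b.1.1) (h2 : a.1.2 + 1 = b.1.2) :
    (halfGridClosed n).Adj a b := hg_adj (by omega)

lemma adj_down {a b : HalfGridVertex n} (h1 : a.1.1 + 1 = b.1.1) (h2 : a.1.2 = b.1.2) :
    (halfGridClosed n).Adj a b := hg_adj (by omega)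


variable {n : ℕ} (G : SimpleGraph (Fin n))

def Nbh (a b : ℕ) : Prop := ∃ (ha : a < n) (hb : b < n), G.Adj ⟨a, ha⟩ ⟨b, hb⟩

lemma Nbh.symm {a b : ℕ} (h : Nbh G a b) : Nbh G b a := by
  obtain ⟨ha, hb, h⟩ := h; exact ⟨hb, ha, h.symm⟩

def Sset (i : ℕ) : Set ℕ := {k | i < k ∧ Nbh G i k}
def Tset (j : ℕ) : Set ℕ := {p | p < j ∧ Nbh G p j}

open scoped Classical in
noncomputable def M (i : ℕ) : ℕ := if (Sset G i).Nonempty then sSup (Sset G i) - 1 else i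

open scoped Classical in
noncomputable def L (j : ℕ) : ℕ :=
  if h : (Tset G j).Nonempty then
    (if j ≤ M G (sInf (Tset G j)) then sInf (Tset G j) + 1 else sInf (Tset G j))
  else j

lemma bddS (i : ℕ) : BddAbove (Sset G i) :=
  ⟨n, fun k hk => le_of_lt hk.2.2.1⟩

lemma sSup_mem_S {i : ℕ} (h : (Sset G i).Nonempty) : sSup (Sset G i) ∈ Sset G i :=
  Nat.sSup_mem h (bddS G i)

lemma le_M (i : ℕ) : i ≤ M G i := by
  unfold M; split
  · next h => have := (sSup_mem_S G h).1; omega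
  · exact le_refl i

lemma M_lt (i : ℕ) (hi : i < n) : M G i < n := by
  unfold M; split
  · next h => have h2 := (sSup_mem_S G h).2.2.1; omega
  · exact hi

lemma M_ge_of_adj {i j : ℕ} (h : Nbh G i j) (hij : i < j) : j - 1 ≤ M G i := by
  have hmem : j ∈ Sset G i := ⟨hij, h⟩
  have := le_csSup (bddS G i) hmem
  unfold M; rw [if_pos ⟨j, hmem⟩]; omega

lemma exists_of_M_ge {i t : ℕ} (hit : i < t) (h : t ≤ M G i) : ∃ k, t < k ∧ Nbh G i k := by
  by_cases hne : (Sset G i).Nonempty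
  · have hm := sSup_mem_S G hne
    refine ⟨sSup (Sset G i), ?_, hm.2⟩
    unfold M at h; rw [if_pos hne] at h; omega
  · unfold M at h; rw [if_neg hne] at h; omega

lemma sInf_mem_T {j : ℕ} (h : (Tset G j).Nonempty) : sInf (Tset G j) ∈ Tset G j :=
  Nat.sInf_mem h

lemma L_le_self (j : ℕ) : L G j ≤ j := by
  unfold L; split
  · next h =>
      have := (sInf_mem_T G h).1
      split <;> omega
  · exact le_refl j

lemma L_le_of_adj {p j : ℕ} (h : Nbh G p j) (hpj : p < j) : L G j ≤ p + 1 := by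
  have hne : (Tset G j).Nonempty := ⟨p, hpj, h⟩
  have hle : sInf (Tset G j) ≤ p := Nat.sInf_le ⟨hpj, h⟩
  unfold L; rw [dif_pos hne]; split <;> omega

lemma L_facts {c j : ℕ} (h : L G j ≤ c) (hcj : c < j) :
    ∃ p, Nbh G p j ∧ p < j ∧ (p < c ∨ (p = c ∧ M G c < j)) := by
  have hne : (Tset G j).Nonempty := by
    by_contra hne
    unfold L at h; rw [dif_neg hne] at h; omega
  have hm := sInf_mem_T G hne
  refine ⟨sInf (Tset G j), hm.2, hm.1, ?_⟩
  unfold L at h; rw [dif_pos hne] at h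
  split at h
  · left; omega
  · next hM =>
      rcases Nat.lt_or_ge (sInf (Tset G j)) c with h' | h'
      · left; exact h'
      · right; have : sInf (Tset G j) = c := by omega
        subst this; exact ⟨rfl, by omega⟩

lemma M_ge_of_L_gt {i j : ℕ} (h : Nbh G i j) (hij : i < j) (hL : i < L G j) : j ≤ M G i := by
  have hne : (Tset G j).Nonempty := ⟨i, hij, h⟩
  have hle : sInf (Tset G j) ≤ i := Nat.sInf_le ⟨hij, h⟩
  unfold L at hL; rw [dif_pos hne] at hL
  split at hL
  · next hM => have : sInf (Tset G j) = i := by omega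
               rwa [this] at hM
  · omega

variable (G : SimpleGraph (Fin n))

def W (i : Fin n) : Set (HalfGridVertex n) :=
  {v | (v.1.1 = i.val ∧ L G i.val ≤ v.1.2) ∨ (v.1.2 = i.val ∧ v.1.1 ≤ M G i.val)}

def diag (i : Fin n) : HalfGridVertex n := ⟨(i.val, i.val), le_refl _, i.isLt⟩

lemma diag_mem (i : Fin n) : diag i ∈ W G i :=
  Or.inr ⟨rfl, le_M G i.val⟩

lemma cross (hnc : ¬ ∃ a b c d : Fin n, a < b ∧ b < c ∧ c < d ∧ G.Adj a c ∧ G.Adj b d)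
    {p j i k : ℕ} (h1 : p < j) (h2 : j < i) (h3 : i < k)
    (e1 : Nbh G p i) (e2 : Nbh G j k) : False := by
  obtain ⟨hp, hi, a1⟩ := e1
  obtain ⟨hj, hk, a2⟩ := e2
  exact hnc ⟨⟨p, hp⟩, ⟨j, hj⟩, ⟨i, hi⟩, ⟨k, hk⟩, by simpa using h1, by simpa using h2,
    by simpa using h3, a1, a2⟩

lemma W_disj (hnc : ¬ ∃ a b c d : Fin n, a < b ∧ b < c ∧ c < d ∧ G.Adj a c ∧ G.Adj b d)
    (i j : Fin n) (hij : i ≠ j) : Disjoint (W G i) (W G j) := by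
  rw [Set.disjoint_left]
  rintro v hvi hvj
  -- helper: row of a and column of b conflict
  have key : ∀ a b : Fin n, v.1.1 = a.val → L G a.val ≤ v.1.2 →
      v.1.2 = b.val → v.1.1 ≤ M G b.val → a = b := by
    intro a b h1 h2 h3 h4
    by_contra hab
    have hba : b.val < a.val := by
      have := v.2.1
      have : b.val ≤ a.val := by omega
      rcases Nat.lt_or_ge b.val a.val with h | h
      · omega
      · exact absurd (Fin.ext (by omega)) hab
    obtain ⟨p, hpN, hpa, hp⟩ := L_facts G (h3 ▸ h2) hba
    rcases hp with hp | ⟨hp, hM⟩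
    · obtain ⟨k, hk, hkN⟩ := exists_of_M_ge G hba (h1 ▸ h4)
      exact cross G hnc hp hba hk hpN hkN
    · omega
  rcases hvi with ⟨h1, h2⟩ | ⟨h1, h2⟩ <;> rcases hvj with ⟨h3, h4⟩ | ⟨h3, h4⟩
  · exact hij (Fin.ext (by omega))
  · exact hij (key i j h1 h2 h3 h4)
  · exact hij (key j i h3 h4 h1 h2).symm
  · exact hij (Fin.ext (by omega))

lemma W_edge_lt {i j : Fin n} (hij : i.val < j.val) (hadj : G.Adj i j) :
    ∃ a ∈ W G i, ∃ b ∈ W G j, (halfGridClosed n).Adj a b := by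
  have hNbh : Nbh G i.val j.val := ⟨i.isLt, j.isLt, by simpa using hadj⟩
  have hM : j.val - 1 ≤ M G i.val := M_ge_of_adj G hNbh hij
  rcases le_or_gt (L G j.val) i.val with hL | hL
  · refine ⟨⟨(j.val - 1, i.val), by omega, by omega⟩, Or.inr ⟨rfl, by simpa using hM⟩,
      ⟨(j.val, i.val), by omega, j.isLt⟩, Or.inl ⟨rfl, hL⟩, adj_down (by simp; omega) rfl⟩
  · have hMi : j.val ≤ M G i.val := M_ge_of_L_gt G hNbh hij hL
    have hL2 : L G j.val ≤ i.val + 1 := L_le_of_adj G hNbh hij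
    refine ⟨⟨(j.val, i.val), by omega, j.isLt⟩, Or.inr ⟨rfl, hMi⟩,
      ⟨(j.val, i.val + 1), by omega, j.isLt⟩, Or.inl ⟨rfl, hL2⟩, adj_right rfl rfl⟩


lemma reach_row (i : Fin n) : ∀ (d : ℕ) (v : HalfGridVertex n) (hv : v ∈ W G i),
    v.1.1 = i.val → i.val - v.1.2 = d →
    ((halfGridClosed n).induce (W G i)).Reachable ⟨v, hv⟩ ⟨diag i, diag_mem G i⟩ := by
  intro d
  induction d with
  | zero =>
    intro v hv h1 h2
    have hle := v.2.1
    have hvd : v = diag i := Subtype.ext (Prod.ext h1 (show (v.1).2 = i.val by omega))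
    subst hvd
    exact Reachable.refl _
  | succ d ih =>
    intro v hv h1 h2
    have hle := v.2.1
    have hv' := hv
    rcases hv' with ⟨_, hL⟩ | ⟨hc, _⟩
    · have hlt : v.1.2 < i.val := by omega
      set w : HalfGridVertex n := ⟨(i.val, v.1.2 + 1), by omega, i.isLt⟩ with hw_def
      have hw : w ∈ W G i := Or.inl ⟨rfl, show L G i.val ≤ v.1.2 + 1 by omega⟩
      have hadj : ((halfGridClosed n).induce (W G i)).Adj ⟨v, hv⟩ ⟨w, hw⟩ :=
        adj_right h1 rfl
      exact hadj.reachable.trans (ih w hw rfl (show i.val - (v.1.2 + 1) = d by omega))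
    · omega

lemma reach_col (i : Fin n) : ∀ (d : ℕ) (v : HalfGridVertex n) (hv : v ∈ W G i),
    v.1.2 = i.val → v.1.1 ≤ M G i.val → v.1.1 - i.val = d →
    ((halfGridClosed n).induce (W G i)).Reachable ⟨v, hv⟩ ⟨diag i, diag_mem G i⟩ := by
  intro d
  induction d with
  | zero =>
    intro v hv h1 h3 h2
    have hle := v.2.1
    have hvd : v = diag i := Subtype.ext (Prod.ext (show (v.1).1 = i.val by omega) h1)
    subst hvd
    exact Reachable.refl _
  | succ d ih =>
    intro v hv h1 h3 h2
    have hle := v.2.1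
    have hlt : i.val < v.1.1 := by omega
    have hn1 : v.1.1 - 1 < n := by have := v.2.2; omega
    set w : HalfGridVertex n := ⟨(v.1.1 - 1, i.val), by omega, hn1⟩ with hw_def
    have hw : w ∈ W G i := Or.inr ⟨rfl, show v.1.1 - 1 ≤ M G i.val by omega⟩
    have hadj : ((halfGridClosed n).induce (W G i)).Adj ⟨w, hw⟩ ⟨v, hv⟩ :=
      adj_down (by show v.1.1 - 1 + 1 = v.1.1; omega) h1.symm
    exact hadj.symm.reachable.trans (ih w hw rfl (show v.1.1 - 1 ≤ M G i.val by omega) (show v.1.1 - 1 - i.val = d by omega))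

lemma W_conn (i : Fin n) : ((halfGridClosed n).induce (W G i)).Connected := by
  rw [connected_iff]
  refine ⟨?_, ⟨⟨diag i, diag_mem G i⟩⟩⟩
  have r : ∀ u : (W G i : Set (HalfGridVertex n)),
      ((halfGridClosed n).induce (W G i)).Reachable u ⟨diag i, diag_mem G i⟩ := by
    rintro ⟨u, hu⟩
    have hu' := hu
    rcases hu' with ⟨h1, h2⟩ | ⟨h1, h2⟩
    · exact reach_row G i (i.val - u.1.2) u hu h1 rfl
    · exact reach_col G i (u.1.1 - i.val) u hu h1 h2 rfl
  intro u v
  exact (r u).trans (r v).symm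

end OPAux

/-- Every outerplanar graph on `n` vertices whose outer face is the Hamiltonian cycle
`v_0 - v_1 - ⋯ - v_{n-1} - v_0` (encoded combinatorially: consecutive vertices are adjacent
and no two chords cross) is a minor of the half-grid with closed diagonal, witnessed by
branch sets `W i` where `W i` contains the diagonal vertex `(i,i)`. -/

theorem outerplanar_minor_of_halfGrid (n : ℕ) (hn : 3 ≤ n)
    (G : SimpleGraph (Fin n))
    (hcycle : ∀ i : Fin n, G.Adj i ⟨(i.val + 1) % n, Nat.mod_lt _ (by omega)⟩)
    (hnoncross : ¬ ∃ a b c d : Fin n, a < b ∧ b < c ∧ c < d ∧ G.Adj a c ∧ G.Adj b d) :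
    ∃ W : Fin n → Set (HalfGridVertex n),
      (∀ i : Fin n, (⟨(i.val, i.val), le_refl _, i.isLt⟩ : HalfGridVertex n) ∈ W i) ∧
      (∀ i, (W i).Nonempty) ∧
      (∀ i, (((halfGridClosed n).induce (W i)).Connected)) ∧
      (∀ i j, i ≠ j → Disjoint (W i) (W j)) ∧
      (∀ i j, G.Adj i j → ∃ a ∈ W i, ∃ b ∈ W j, (halfGridClosed n).Adj a b) := by
  refine ⟨OPAux.W G, fun i => OPAux.diag_mem G i, fun i => ⟨_, OPAux.diag_mem G i⟩,
    fun i => OPAux.W_conn G i, fun i j h => OPAux.W_disj G hnoncross i j h, ?_⟩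
  intro i j hadj
  rcases Nat.lt_trichotomy i.val j.val with h | h | h
  · exact OPAux.W_edge_lt G h hadj
  · exact absurd (Fin.ext h) hadj.ne
  · obtain ⟨a, ha, b, hb, hab⟩ := OPAux.W_edge_lt G h hadj.symm
    exact ⟨b, hb, a, ha, hab.symm⟩
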